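/- For every n ≥ 1 one has in ℂ[X] the identity X^n − 1 = ∏_{d ∣∣ n, n/d exponentially odd} Q_d^*(X), where the product runs over the unitary divisors d of n such that n/d is exponentially odd. -/
import Mathlib


open Complex Polynomial Finset

open scoped Classical

/-- The unitary gcd `(j,n)_*`: the largest `d` with `d ∣ j`, `d ∣ n` and `gcd(d, n/d) = 1`. -/
def ugcd (j n : ℕ) : ℕ :=
  Nat.findGreatest (fun d => d ∣ j ∧ d ∣ n ∧ Nat.gcd d (n / d) = 1) n

/-- `Q_n^*(X) = ∏_{1 ≤ j ≤ n, (j,n)_* a perfect square} (X − ζ_n^j)`. -/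
noncomputable def Qstar (n : ℕ) : Polynomial ℂ :=
  ∏ j ∈ (Finset.Icc 1 n).filter (fun j => ∃ m : ℕ, ugcd j n = m ^ 2),
    (X - C (Complex.exp (2 * Real.pi * Complex.I / n) ^ j))

/-- A positive integer is exponentially odd if every exponent in its prime
factorization is odd. -/
def ExpOdd (m : ℕ) : Prop := ∀ p ∈ m.primeFactors, Odd (m.factorization p)

/-! Auxiliary machinery -/

/-- The unitary divisor of `n` built from the primes satisfying `f`. -/
noncomputable def uprod (f : ℕ → Prop) (n : ℕ) : ℕ :=
  ∏ p ∈ n.primeFactors, if f p then p ^ n.factorization p else 1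

lemma uprod_pos (f : ℕ → Prop) (n : ℕ) : 0 < uprod f n := by
  apply Finset.prod_pos
  intro p hp
  split_ifs
  · exact pow_pos (Nat.prime_of_mem_primeFactors hp).pos _
  · exact one_pos

lemma uprod_factorization (f : ℕ → Prop) {n : ℕ} (hn : n ≠ 0) (q : ℕ) :
    (uprod f n).factorization q =
      if q ∈ n.primeFactors ∧ f q then n.factorization q else 0 := by
  have h0 : ∀ p ∈ n.primeFactors, (if f p then p ^ n.factorization p else 1) ≠ 0 := by
    intro p hp
    split_ifs
    · exact pow_ne_zero _ (Nat.prime_of_mem_primeFactors hp).pos.ne'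
    · exact one_ne_zero
  rw [uprod, Nat.factorization_prod h0, Finsupp.finset_sum_apply]
  have step : ∀ p ∈ n.primeFactors,
      ((if f p then p ^ n.factorization p else 1).factorization) q
        = if p = q then (if f q then n.factorization q else 0) else 0 := by
    intro p hp
    have hprime := Nat.prime_of_mem_primeFactors hp
    by_cases hf : f p
    · by_cases hpq : p = q
      · subst hpq
        simp [hf, hprime.factorization_pow, Finsupp.single_apply]
      · simp [hf, hprime.factorization_pow, Finsupp.single_apply, hpq]
    · rw [if_neg hf, Nat.factorization_one]
      simp only [Finsupp.coe_zero, Pi.zero_apply]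
      split_ifs with h1 h2
      · exact absurd (by rwa [h1]) hf
      · rfl
      · rfl
  rw [Finset.sum_congr rfl step, Finset.sum_ite_eq' n.primeFactors q
    (fun _ => if f q then n.factorization q else 0)]
  by_cases hq : q ∈ n.primeFactors <;> by_cases hf : f q <;> simp [hq, hf]

lemma uprod_dvd (f : ℕ → Prop) {n : ℕ} (hn : n ≠ 0) : uprod f n ∣ n := by
  rw [← Nat.factorization_le_iff_dvd (uprod_pos f n).ne' hn]
  rw [Finsupp.le_def]
  intro q
  rw [uprod_factorization f hn]
  split_ifs
  · exact le_rfl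
  · exact Nat.zero_le _

lemma uprod_unitary (f : ℕ → Prop) {n : ℕ} (hn : n ≠ 0) :
    Nat.gcd (uprod f n) (n / uprod f n) = 1 := by
  have hU := uprod_dvd f hn
  have hU0 : uprod f n ≠ 0 := (uprod_pos f n).ne'
  have hd0 : n / uprod f n ≠ 0 :=
    (Nat.div_pos (Nat.le_of_dvd (Nat.pos_of_ne_zero hn) hU) (uprod_pos f n)).ne'
  have hg0 : Nat.gcd (uprod f n) (n / uprod f n) ≠ 0 := Nat.gcd_ne_zero_left hU0
  apply Nat.eq_of_factorization_eq hg0 one_ne_zero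
  intro p
  rw [Nat.factorization_one, Nat.factorization_gcd hU0 hd0, Finsupp.inf_apply,
    Nat.factorization_div hU, Finsupp.tsub_apply, uprod_factorization f hn]
  simp only [Finsupp.coe_zero, Pi.zero_apply]
  split_ifs with h
  · simp
  · simp

lemma ugcd_eq {j n : ℕ} (hj : j ≠ 0) (hn : n ≠ 0) :
    ugcd j n = uprod (fun p => p ^ n.factorization p ∣ j) n := by
  set U := uprod (fun p => p ^ n.factorization p ∣ j) n with hUdef
  have hU0 : U ≠ 0 := (uprod_pos _ n).ne'
  have hUn : U ∣ n := uprod_dvd _ hn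
  have hUj : U ∣ j := by
    rw [← Nat.factorization_le_iff_dvd hU0 hj, Finsupp.le_def]
    intro q
    rw [hUdef, uprod_factorization _ hn]
    split_ifs with h
    · exact ((Nat.prime_of_mem_primeFactors h.1).pow_dvd_iff_le_factorization hj).mp h.2
    · exact Nat.zero_le _
  have hpred : U ∣ j ∧ U ∣ n ∧ Nat.gcd U (n / U) = 1 := ⟨hUj, hUn, uprod_unitary _ hn⟩
  have hUle : U ≤ n := Nat.le_of_dvd (Nat.pos_of_ne_zero hn) hUn
  -- every candidate divides U
  have hmax : ∀ d, (d ∣ j ∧ d ∣ n ∧ Nat.gcd d (n / d) = 1) → d ∣ U := by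
    rintro d ⟨hdj, hdn, hdg⟩
    have hd0 : d ≠ 0 := fun h => hj (by simpa [h] using hdj)
    rw [← Nat.factorization_le_iff_dvd hd0 hU0, Finsupp.le_def]
    intro q
    by_cases hq0 : d.factorization q = 0
    · simp [hq0]
    have hqp : q.Prime := by
      by_contra hq
      exact hq0 (Nat.factorization_eq_zero_of_not_prime d hq)
    have hnd0 : n / d ≠ 0 :=
      (Nat.div_pos (Nat.le_of_dvd (Nat.pos_of_ne_zero hn) hdn) (Nat.pos_of_ne_zero hd0)).ne'
    have hmin : min (d.factorization q) ((n / d).factorization q) = 0 := by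
      have := congrArg (fun f => f q) (congrArg Nat.factorization hdg)
      simpa [Nat.factorization_gcd hd0 hnd0, Finsupp.inf_apply] using this
    have hdiv : (n / d).factorization q = n.factorization q - d.factorization q := by
      rw [Nat.factorization_div hdn, Finsupp.tsub_apply]
    have hle : d.factorization q ≤ n.factorization q := by
      have := (Nat.factorization_le_iff_dvd hd0 hn).mpr hdn
      exact Finsupp.le_def.mp this q
    have heq : d.factorization q = n.factorization q := by
      rcases Nat.min_eq_zero_iff.mp hmin with h | h
      · exact absurd h hq0
      · omega
    have hqmem : q ∈ n.primeFactors := by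
      rw [Nat.mem_primeFactors]
      exact ⟨hqp, Nat.dvd_of_factorization_pos (by omega), hn⟩
    have hqj : q ^ n.factorization q ∣ j := by
      calc q ^ n.factorization q = q ^ d.factorization q := by rw [heq]
        _ ∣ d := Nat.ordProj_dvd d q
        _ ∣ j := hdj
    rw [hUdef, uprod_factorization _ hn]
    simp only [hqmem, hqj, and_self, if_true]
    exact hle.trans_eq rfl |>.trans (le_of_eq rfl) |>.trans (by omega)
  have h1 : U ≤ ugcd j n := by
    unfold ugcd
    exact Nat.le_findGreatest hUle hpred
  have h2 : ugcd j n ≤ U := by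
    refine Nat.le_of_dvd (Nat.pos_of_ne_zero hU0) (hmax _ ?_)
    show (fun d => d ∣ j ∧ d ∣ n ∧ Nat.gcd d (n / d) = 1) (ugcd j n)
    unfold ugcd
    exact Nat.findGreatest_spec
      (P := fun d => d ∣ j ∧ d ∣ n ∧ Nat.gcd d (n / d) = 1) hUle hpred
  omega

lemma sq_of_even_factorization {m : ℕ} (hm : m ≠ 0)
    (h : ∀ q, Even (m.factorization q)) : ∃ r : ℕ, m = r ^ 2 := by
  refine ⟨m.factorization.prod fun p k => p ^ (k / 2), ?_⟩
  conv_lhs => rw [← Nat.factorization_prod_pow_eq_self hm]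
  rw [Finsupp.prod, Finsupp.prod, ← Finset.prod_pow]
  apply Finset.prod_congr rfl
  intro p _
  rw [← pow_mul]
  congr 1
  have := (h p).two_dvd
  omega

/-- the exponentially odd unitary cofactor attached to `j`. -/
noncomputable def epart (j n : ℕ) : ℕ :=
  uprod (fun p => Odd (n.factorization p) ∧ p ^ n.factorization p ∣ j) n

lemma epart_pos (j n : ℕ) : 0 < epart j n := uprod_pos _ n

lemma epart_dvd (j : ℕ) {n : ℕ} (hn : n ≠ 0) : epart j n ∣ n := uprod_dvd _ hn

lemma epart_factorization (j : ℕ) {n : ℕ} (hn : n ≠ 0) (q : ℕ) :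
    (epart j n).factorization q =
      if q ∈ n.primeFactors ∧ Odd (n.factorization q) ∧ q ^ n.factorization q ∣ j
      then n.factorization q else 0 := by
  unfold epart
  rw [uprod_factorization _ hn q]
  split_ifs with h <;> rfl

lemma exists_decomp {n j : ℕ} (hn : n ≠ 0) (hj1 : 1 ≤ j) (hjn : j ≤ n) :
    ∃ d j' : ℕ, (d ∣ n ∧ Nat.gcd d (n / d) = 1 ∧ ExpOdd (n / d)) ∧
      (1 ≤ j' ∧ j' ≤ d ∧ ∃ m, ugcd j' d = m ^ 2) ∧ j' * (n / d) = j := by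
  have he_dvd : epart j n ∣ n := epart_dvd j hn
  have he_pos : 0 < epart j n := epart_pos j n
  have hj0 : j ≠ 0 := by omega
  have hej : epart j n ∣ j := by
    rw [← Nat.factorization_le_iff_dvd he_pos.ne' hj0, Finsupp.le_def]
    intro q
    rw [epart_factorization j hn q]
    split_ifs with h
    · exact ((Nat.prime_of_mem_primeFactors h.1).pow_dvd_iff_le_factorization hj0).mp h.2.2
    · exact Nat.zero_le _
  have hnd : n / (n / epart j n) = epart j n := Nat.div_div_self he_dvd hn
  have hd_dvd : n / epart j n ∣ n := Nat.div_dvd_of_dvd he_dvd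
  have hd_pos : 0 < n / epart j n :=
    Nat.div_pos (Nat.le_of_dvd (Nat.pos_of_ne_zero hn) he_dvd) he_pos
  have hj'e : j / epart j n * epart j n = j := Nat.div_mul_cancel hej
  have hj'_pos : 0 < j / epart j n := Nat.div_pos (Nat.le_of_dvd (by omega) hej) he_pos
  have hj'd : j / epart j n ≤ n / epart j n := Nat.div_le_div_right hjn
  have hgcd : Nat.gcd (n / epart j n) (n / (n / epart j n)) = 1 := by
    rw [hnd, Nat.gcd_comm]
    exact uprod_unitary _ hn
  have hodd : ExpOdd (n / (n / epart j n)) := by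
    rw [hnd]
    intro p hp
    have hp0 : (epart j n).factorization p ≠ 0 := by
      rw [← Nat.support_factorization] at hp
      exact Finsupp.mem_support_iff.mp hp
    rw [epart_factorization j hn p] at hp0 ⊢
    split_ifs at hp0 ⊢ with h
    · exact h.2.1
    · omega
  have hsq : ∃ m, ugcd (j / epart j n) (n / epart j n) = m ^ 2 := by
    rw [ugcd_eq hj'_pos.ne' hd_pos.ne']
    apply sq_of_even_factorization (uprod_pos _ _).ne'
    intro q
    rw [uprod_factorization _ hd_pos.ne']
    split_ifs with h
    · obtain ⟨hqd, hqj'⟩ := h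
      have hqd0 : (n / epart j n).factorization q ≠ 0 := by
        rw [← Nat.support_factorization] at hqd
        exact Finsupp.mem_support_iff.mp hqd
      have hdq : (n / epart j n).factorization q
          = n.factorization q - (epart j n).factorization q := by
        rw [Nat.factorization_div he_dvd, Finsupp.tsub_apply]
      have hecases : (epart j n).factorization q = 0
          ∨ (epart j n).factorization q = n.factorization q := by
        rw [epart_factorization j hn q]
        split_ifs with h2
        · right; rfl
        · left; rfl
      have heq0 : (epart j n).factorization q = 0 := by
        rcases hecases with h2 | h2
        · exact h2
        · omega
      have hdqn : (n / epart j n).factorization q = n.factorization q := by omega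
      have hqn : q ∈ n.primeFactors := Nat.primeFactors_mono hd_dvd hn hqd
      have hqj : q ^ n.factorization q ∣ j := by
        calc q ^ n.factorization q
            = q ^ (n / epart j n).factorization q := by rw [hdqn]
          _ ∣ j / epart j n := hqj'
          _ ∣ j := ⟨epart j n, hj'e.symm⟩
      have hnotodd : ¬ Odd (n.factorization q) := by
        intro hoddq
        have hcon : (epart j n).factorization q = n.factorization q := by
          rw [epart_factorization j hn q, if_pos ⟨hqn, hoddq, hqj⟩]
        omega
      rw [hdqn]
      exact Nat.not_odd_iff_even.mp hnotodd
    · exact Even.zero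
  exact ⟨n / epart j n, j / epart j n, ⟨hd_dvd, hgcd, hodd⟩, ⟨hj'_pos, hj'd, hsq⟩,
    by rw [hnd]; exact hj'e⟩

lemma uniq_decomp {n d j' : ℕ} (hn : n ≠ 0) (hd : d ∣ n)
    (hgcd : Nat.gcd d (n / d) = 1) (hodd : ExpOdd (n / d))
    (hj'1 : 1 ≤ j') (hj'd : j' ≤ d) (hsq : ∃ m, ugcd j' d = m ^ 2) :
    n / d = epart (j' * (n / d)) n := by
  have hd0 : d ≠ 0 := by omega
  have he'_dvd : n / d ∣ n := Nat.div_dvd_of_dvd hd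
  have he'0 : n / d ≠ 0 :=
    (Nat.div_pos (Nat.le_of_dvd (Nat.pos_of_ne_zero hn) hd) (Nat.pos_of_ne_zero hd0)).ne'
  have he'j : n / d ∣ j' * (n / d) := dvd_mul_left _ _
  have hsum : ∀ q, d.factorization q + (n / d).factorization q = n.factorization q := by
    intro q
    have hmul : d * (n / d) = n := Nat.mul_div_cancel' hd
    have := congrArg (fun f => f q) (congrArg Nat.factorization hmul)
    simpa [Nat.factorization_mul hd0 he'0] using this
  have hmin : ∀ q, d.factorization q = 0 ∨ (n / d).factorization q = 0 := by
    intro q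
    have := congrArg (fun f => f q) (congrArg Nat.factorization hgcd)
    simp only [Nat.factorization_gcd hd0 he'0, Finsupp.inf_apply,
      Nat.factorization_one, Finsupp.coe_zero, Pi.zero_apply] at this
    omega
  apply Nat.eq_of_factorization_eq he'0 (epart_pos _ n).ne'
  intro q
  rw [epart_factorization _ hn q]
  by_cases hqp : q.Prime
  · by_cases h1 : (n / d).factorization q = 0
    · rw [h1]
      split_ifs with h2
      · exfalso
        obtain ⟨hqn, hqodd, hqj⟩ := h2
        have hdq : d.factorization q = n.factorization q := by
          have := hsum q; omega
        have hnq0 : n.factorization q ≠ 0 := by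
          rw [← Nat.support_factorization] at hqn
          exact Finsupp.mem_support_iff.mp hqn
        have hqne' : ¬ q ∣ n / d := by
          intro hdvd
          have := (Nat.factorization_eq_zero_iff (n / d) q).mp h1
          tauto
        have hcop : Nat.Coprime (q ^ n.factorization q) (n / d) :=
          Nat.Coprime.pow_left _ ((Nat.Prime.coprime_iff_not_dvd hqp).mpr hqne')
        have hqj' : q ^ n.factorization q ∣ j' := hcop.dvd_of_dvd_mul_right hqj
        obtain ⟨m, hm⟩ := hsq
        rw [ugcd_eq (by omega) hd0] at hm
        have heven : Even ((m ^ 2).factorization q) := by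
          rw [Nat.factorization_pow]
          exact ⟨m.factorization q, by simp [two_mul]⟩
        rw [← hm, uprod_factorization _ hd0] at heven
        have hqdmem : q ∈ d.primeFactors := by
          rw [Nat.mem_primeFactors]
          exact ⟨hqp, Nat.dvd_of_factorization_pos (by omega), hd0⟩
        have hqdj' : q ^ d.factorization q ∣ j' := by rw [hdq]; exact hqj'
        rw [if_pos ⟨hqdmem, hqdj'⟩, hdq] at heven
        exact (Nat.not_odd_iff_even.mpr heven) hqodd
      · rfl
    · have hdq0 : d.factorization q = 0 := by
        rcases hmin q with h | h
        · exact h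
        · omega
      have he'q : (n / d).factorization q = n.factorization q := by
        have := hsum q; omega
      have hqe'mem : q ∈ (n / d).primeFactors := by
        rw [← Nat.support_factorization]
        exact Finsupp.mem_support_iff.mpr h1
      have hqodd : Odd (n.factorization q) := by
        have := hodd q hqe'mem
        rwa [he'q] at this
      have hqn : q ∈ n.primeFactors := Nat.primeFactors_mono he'_dvd hn hqe'mem
      have hqj : q ^ n.factorization q ∣ j' * (n / d) := by
        calc q ^ n.factorization q = q ^ (n / d).factorization q := by rw [he'q]
          _ ∣ n / d := Nat.ordProj_dvd _ q
          _ ∣ j' * (n / d) := he'j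
      rw [if_pos ⟨hqn, hqodd, hqj⟩]
      exact he'q
  · rw [Nat.factorization_eq_zero_of_not_prime (n / d) hqp]
    split_ifs with h
    · exact absurd (Nat.prime_of_mem_primeFactors h.1) hqp
    · rfl

theorem stmt7 (n : ℕ) (hn : 1 ≤ n) :
    (X ^ n - 1 : Polynomial ℂ) =
      ∏ d ∈ n.divisors.filter (fun d => Nat.gcd d (n / d) = 1 ∧ ExpOdd (n / d)), Qstar d := by
  have hn0 : n ≠ 0 := by omega
  have hnpos : 0 < n := hn
  set ζ : ℂ := Complex.exp (2 * Real.pi * Complex.I / n) with hζdef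
  have hζ : IsPrimitiveRoot ζ n := Complex.isPrimitiveRoot_exp n hn0
  -- Step 1: X^n - 1 = ∏_{j ∈ Icc 1 n} (X - C (ζ^j))
  have step1 : (X ^ n - 1 : Polynomial ℂ) = ∏ j ∈ Finset.Icc 1 n, (X - C (ζ ^ j)) := by
    rw [X_pow_sub_one_eq_prod hnpos hζ]
    symm
    apply Finset.prod_nbij (fun j => ζ ^ j)
    · intro j hj
      rw [mem_nthRootsFinset hnpos, ← pow_mul, mul_comm, pow_mul, hζ.pow_eq_one, one_pow]
    · intro j₁ hj₁ j₂ hj₂ hpow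
      have hpow' : ζ ^ j₁ = ζ ^ j₂ := hpow
      simp only [Finset.coe_Icc, Set.mem_Icc] at hj₁ hj₂
      have key : ∀ a, 1 ≤ a → a ≤ n → ζ ^ (a % n) = ζ ^ a := by
        intro a _ _
        conv_rhs => rw [← Nat.div_add_mod a n]
        rw [pow_add, pow_mul, hζ.pow_eq_one, one_pow, one_mul]
      have h1 : ζ ^ (j₁ % n) = ζ ^ (j₂ % n) := by
        rw [key _ hj₁.1 hj₁.2, key _ hj₂.1 hj₂.2]
        exact hpow'
      have hmod := hζ.pow_inj (Nat.mod_lt _ hnpos) (Nat.mod_lt _ hnpos) h1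
      rcases eq_or_lt_of_le hj₁.2 with h | h <;> rcases eq_or_lt_of_le hj₂.2 with h' | h'
      · omega
      · exfalso; rw [h, Nat.mod_self, Nat.mod_eq_of_lt h'] at hmod; omega
      · exfalso; rw [h', Nat.mod_self, Nat.mod_eq_of_lt h] at hmod; omega
      · rw [Nat.mod_eq_of_lt h, Nat.mod_eq_of_lt h'] at hmod; exact hmod
    · intro x hx
      simp only [Finset.mem_coe] at hx
      rw [mem_nthRootsFinset hnpos] at hx
      haveI : NeZero n := ⟨hn0⟩
      obtain ⟨i, hi, hix⟩ := hζ.eq_pow_of_pow_eq_one hx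
      rcases Nat.eq_zero_or_pos i with h0 | h0
      · refine ⟨n, ?_, ?_⟩
        · simp only [Finset.coe_Icc, Set.mem_Icc]; omega
        · show ζ ^ n = x
          rw [hζ.pow_eq_one, ← hix, h0, pow_zero]
      · exact ⟨i, by simp only [Finset.coe_Icc, Set.mem_Icc]; omega, hix⟩
    · intro j hj; rfl
  rw [step1]
  -- Step 2: rewrite each Qstar d in terms of ζ
  set S := n.divisors.filter (fun d => Nat.gcd d (n / d) = 1 ∧ ExpOdd (n / d)) with hS
  have hQ : ∀ d ∈ S, Qstar d =
      ∏ j' ∈ (Finset.Icc 1 d).filter (fun j => ∃ m : ℕ, ugcd j d = m ^ 2),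
        (X - C (ζ ^ (j' * (n / d)))) := by
    intro d hd
    rw [hS, Finset.mem_filter, Nat.mem_divisors] at hd
    obtain ⟨⟨hdn, -⟩, -, -⟩ := hd
    have hd0 : d ≠ 0 := by
      rintro rfl; exact hn0 (Nat.eq_zero_of_zero_dvd hdn)
    have hzeta_d : Complex.exp (2 * Real.pi * Complex.I / d) = ζ ^ (n / d) := by
      rw [hζdef, ← Complex.exp_nat_mul]
      congr 1
      have hdne : (d : ℂ) ≠ 0 := Nat.cast_ne_zero.mpr hd0
      have hnne : (n : ℂ) ≠ 0 := Nat.cast_ne_zero.mpr hn0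
      have hcast : (d : ℂ) * ((n / d : ℕ) : ℂ) = (n : ℂ) := by
        rw [← Nat.cast_mul, Nat.mul_div_cancel' hdn]
      have hq0 : ((n / d : ℕ) : ℂ) ≠ 0 := by
        have : 0 < n / d := Nat.div_pos (Nat.le_of_dvd (by omega) hdn) (by omega)
        exact_mod_cast this.ne'
      rw [← hcast]
      field_simp
    rw [Qstar]
    apply Finset.prod_congr rfl
    intro j' _
    rw [hzeta_d, ← pow_mul, mul_comm]
  rw [Finset.prod_congr rfl hQ, Finset.prod_sigma']
  -- Step 3: reindex via (d, j') ↦ j' * (n / d)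
  symm
  apply Finset.prod_nbij (fun x => x.2 * (n / x.1))
  · rintro ⟨d, j'⟩ hx
    rw [Finset.mem_sigma] at hx
    have hd : d ∈ S := hx.1
    have hj' : j' ∈ (Finset.Icc 1 d).filter (fun j => ∃ m : ℕ, ugcd j d = m ^ 2) := hx.2
    rw [hS, Finset.mem_filter, Nat.mem_divisors] at hd
    rw [Finset.mem_filter, Finset.mem_Icc] at hj'
    obtain ⟨⟨hdn, -⟩, -, -⟩ := hd
    obtain ⟨⟨hj1, hj2⟩, -⟩ := hj'
    have hd0 : 0 < d := by omega
    have hnd_pos : 0 < n / d := Nat.div_pos (Nat.le_of_dvd hnpos hdn) hd0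
    show j' * (n / d) ∈ Finset.Icc 1 n
    rw [Finset.mem_Icc]
    constructor
    · exact Nat.one_le_iff_ne_zero.mpr (Nat.mul_ne_zero (by omega) (by omega))
    · calc j' * (n / d) ≤ d * (n / d) := Nat.mul_le_mul_right _ hj2
        _ = n := Nat.mul_div_cancel' hdn
  · rintro ⟨d₁, j₁⟩ hx₁ ⟨d₂, j₂⟩ hx₂ heq
    have heq' : j₁ * (n / d₁) = j₂ * (n / d₂) := heq
    simp only [Finset.mem_coe, Finset.mem_sigma] at hx₁ hx₂
    have hd₁ : d₁ ∈ S := hx₁.1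
    have hj₁ : j₁ ∈ (Finset.Icc 1 d₁).filter (fun j => ∃ m : ℕ, ugcd j d₁ = m ^ 2) := hx₁.2
    have hd₂ : d₂ ∈ S := hx₂.1
    have hj₂ : j₂ ∈ (Finset.Icc 1 d₂).filter (fun j => ∃ m : ℕ, ugcd j d₂ = m ^ 2) := hx₂.2
    rw [hS, Finset.mem_filter, Nat.mem_divisors] at hd₁ hd₂
    rw [Finset.mem_filter, Finset.mem_Icc] at hj₁ hj₂
    have h₁ := uniq_decomp hn0 hd₁.1.1 hd₁.2.1 hd₁.2.2 hj₁.1.1 hj₁.1.2 hj₁.2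
    have h₂ := uniq_decomp hn0 hd₂.1.1 hd₂.2.1 hd₂.2.2 hj₂.1.1 hj₂.1.2 hj₂.2
    rw [heq'] at h₁
    have hnd : n / d₁ = n / d₂ := h₁.trans h₂.symm
    have hd : d₁ = d₂ := by
      have e₁ : n / (n / d₁) = d₁ := Nat.div_div_self hd₁.1.1 hn0
      have e₂ : n / (n / d₂) = d₂ := Nat.div_div_self hd₂.1.1 hn0
      rw [← e₁, ← e₂, hnd]
    subst hd
    have hnd_pos : 0 < n / d₁ :=
      Nat.div_pos (Nat.le_of_dvd hnpos hd₁.1.1) (by omega)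
    have hj : j₁ = j₂ := Nat.eq_of_mul_eq_mul_right hnd_pos heq'
    subst hj
    rfl
  · intro j hj
    simp only [Finset.mem_coe, Finset.mem_Icc] at hj
    obtain ⟨d, j', ⟨hdn, hgcd, hodd⟩, ⟨hj'1, hj'd, hsq⟩, hprod⟩ :=
      exists_decomp hn0 hj.1 hj.2
    refine ⟨⟨d, j'⟩, ?_, hprod⟩
    simp only [Finset.mem_coe, Finset.mem_sigma]
    constructor
    · rw [hS, Finset.mem_filter, Nat.mem_divisors]
      exact ⟨⟨hdn, hn0⟩, hgcd, hodd⟩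
    · rw [Finset.mem_filter, Finset.mem_Icc]
      exact ⟨⟨hj'1, hj'd⟩, hsq⟩
  · intro x hx; rfl
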